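/- Let z ∈ ℂ with z ∉ (−∞,0] ∪ [1,∞), let τ := 2*π*Complex.I, and let M be the 3×3 complex matrix !![1, Complex.log (1−z), −Li₂(z); 0, τ, τ * Complex.log z; 0, 0, τ^2] (the period matrix of the second polylogarithm Hodge–Tate structure 𝒫⁽²⁾(z)). Then the skew-symmetric period of M, namely the image of Σ_{k : Fin 3} (M⁻¹) 0 k ⊗ₜ[ℚ] (τ^{−2} * (M k 2)) under the map ℂ ⊗[ℚ] ℂ → Λ²_ℚ ℂ, x ⊗ₜ y ↦ x ∧ y, equals the Bloch regulator ρ̃(z) := (Complex.log z / τ) ∧ (Complex.log (1−z) / τ) + 1 ∧ (D(z)/τ^2). -/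

import Mathlib

open scoped TensorProduct

noncomputable section

/-- The wedge product `x ∧ y` of two complex numbers, as an element of the second
exterior power `⋀[ℚ]^2 ℂ` of `ℂ` as a `ℚ`-vector space. -/
def wedge (x y : ℂ) : ⋀[ℚ]^2 ℂ :=
  ⟨ExteriorAlgebra.ιMulti ℚ 2 ![x, y],
    ExteriorAlgebra.ιMulti_range ℚ 2 ⟨![x, y], rfl⟩⟩

lemma update_zero (x y z : ℂ) : Function.update ![x, y] 0 z = ![z, y] := by
  ext i; fin_cases i <;> simp

lemma update_one (x y z : ℂ) : Function.update ![x, y] 1 z = ![x, z] := by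
  ext i; fin_cases i <;> simp

/-- The wedge product as a `ℚ`-bilinear map. -/
def wedgeBil : ℂ →ₗ[ℚ] ℂ →ₗ[ℚ] ⋀[ℚ]^2 ℂ :=
  LinearMap.mk₂ ℚ wedge
    (fun x x' y => by
      have h := (ExteriorAlgebra.ιMulti ℚ 2 (M := ℂ)).map_update_add ![x, y] 0 x x'
      apply Subtype.ext
      simpa [wedge, update_zero] using h)
    (fun q x y => by
      have h := (ExteriorAlgebra.ιMulti ℚ 2 (M := ℂ)).map_update_smul ![x, y] 0 q x
      apply Subtype.ext
      simpa [wedge, update_zero] using h)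
    (fun x y y' => by
      have h := (ExteriorAlgebra.ιMulti ℚ 2 (M := ℂ)).map_update_add ![x, y] 1 y y'
      apply Subtype.ext
      simpa [wedge, update_one] using h)
    (fun q x y => by
      have h := (ExteriorAlgebra.ιMulti ℚ 2 (M := ℂ)).map_update_smul ![x, y] 1 q y
      apply Subtype.ext
      simpa [wedge, update_one] using h)

/-- The `ℚ`-linear map `ℂ ⊗[ℚ] ℂ → ⋀[ℚ]^2 ℂ` sending `x ⊗ₜ y` to `x ∧ y`. -/
def wedgeTensor : ℂ ⊗[ℚ] ℂ →ₗ[ℚ] ⋀[ℚ]^2 ℂ :=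
  TensorProduct.lift wedgeBil

/-- The dilogarithm `Li₂(z)`, defined for `z ∉ (−∞,0] ∪ [1,∞)` as the integral of
`−log(1−t)/t` along the segment from `0` to `z`. -/
def Li2 (z : ℂ) : ℂ := -∫ u in (0:ℝ)..1, Complex.log (1 - (u : ℂ) * z) / (u : ℂ)

/-- The integral of `log(1−t)/t + log t/(1−t)` along the segment from `0` to `z`. -/
def Dfun (z : ℂ) : ℂ :=
  ∫ u in (0:ℝ)..1,
    (Complex.log (1 - (u : ℂ) * z) / (u : ℂ) +
      z * Complex.log ((u : ℂ) * z) / (1 - (u : ℂ) * z))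

/-!
The first row of `M⁻¹` is `(1, -log (1 - z) / τ, (log (1 - z) log z + Li₂ z) / τ²)`, so bilinearity
and antisymmetry of `∧` turn the skew-symmetric period into
`(log z / τ) ∧ (log (1 - z) / τ) + 1 ∧ ((-2 Li₂ z - log z log (1 - z)) / τ²)`.
It remains to see `D(z) = -2 Li₂(z) - log z log (1 - z)`: on the segment `u ↦ u z`, the integrand
of `D` is twice that of `-Li₂` minus the derivative of `u ↦ log (u z) log (1 - u z)`, which tends
to `0` as `u → 0⁺` and equals `log z log (1 - z)` at `u = 1`.
-/

open MeasureTheory Set Filter Topology Complex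

lemma mem_slitPlane_of_notMem_ofReal_image {z : ℂ} (hz : z ∉ ofReal '' (Iic 0 ∪ Ici 1)) :
    z ∈ slitPlane ∧ 1 - z ∈ slitPlane := by
  simp only [mem_slitPlane_iff, sub_re, one_re, sub_im, one_im, zero_sub, ne_eq, neg_eq_zero]
  constructor <;> by_contra! h
  · exact hz ⟨z.re, Or.inl h.1, Complex.ext rfl h.2.symm⟩
  · exact hz ⟨z.re, Or.inr (mem_Ici.2 (by linarith [h.1])), Complex.ext rfl h.2.symm⟩

lemma ofReal_mul_mem_slitPlane {z : ℂ} {u : ℝ} (hu : 0 < u) (hz : z ∈ slitPlane) :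
    (u : ℂ) * z ∈ slitPlane := by
  rw [mem_slitPlane_iff, re_ofReal_mul, im_ofReal_mul] at *
  exact hz.imp (mul_pos hu) (mul_ne_zero hu.ne')

lemma one_sub_ofReal_mul_mem_slitPlane {z : ℂ} {u : ℝ} (hu : u ∈ Icc (0 : ℝ) 1)
    (hz : 1 - z ∈ slitPlane) : 1 - (u : ℂ) * z ∈ slitPlane := by
  convert starConvex_one_slitPlane hz (sub_nonneg.2 hu.2) hu.1 (sub_add_cancel 1 u) using 1
  simp only [real_smul, ofReal_sub, ofReal_one]
  ring

section Dilogarithm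

variable {z : ℂ}

lemma hasDerivAt_log_ofReal_mul {u : ℝ} (hu : (u : ℂ) * z ∈ slitPlane) :
    HasDerivAt (fun u : ℝ => log (u * z)) (z / (u * z)) u := by
  simpa using (ofRealCLM.hasDerivAt.mul_const z).clog_real hu

lemma hasDerivAt_log_one_sub_ofReal_mul {u : ℝ} (hu : 1 - (u : ℂ) * z ∈ slitPlane) :
    HasDerivAt (fun u : ℝ => log (1 - u * z)) (-z / (1 - u * z)) u := by
  simpa using ((ofRealCLM.hasDerivAt.mul_const z).const_sub 1).clog_real hu

lemma slope_log_one_sub_ofReal_mul (u : ℝ) :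
    slope (fun u : ℝ => log (1 - u * z)) 0 u = log (1 - u * z) / u := by
  simp [slope_def_module, real_smul, div_eq_inv_mul]

lemma intervalIntegrable_log_one_sub_ofReal_mul_div (hz : 1 - z ∈ slitPlane) :
    IntervalIntegrable (fun u : ℝ => log (1 - u * z) / u) volume 0 1 := by
  have hcont : ContinuousOn (dslope (fun u : ℝ => log (1 - u * z)) 0) (Icc 0 1) := by
    intro u hu
    have hdiff := (hasDerivAt_log_one_sub_ofReal_mul
      (one_sub_ofReal_mul_mem_slitPlane hu hz)).differentiableAt
    rcases eq_or_ne u 0 with rfl | hu0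
    · exact (continuousAt_dslope_same.2 hdiff).continuousWithinAt
    · exact ((continuousAt_dslope_of_ne hu0).2 hdiff.continuousAt).continuousWithinAt
  have hint := (uIcc_of_le (zero_le_one' ℝ) ▸ hcont).intervalIntegrable (μ := volume)
  rw [intervalIntegrable_iff_integrableOn_Ioc_of_le zero_le_one] at hint ⊢
  refine hint.congr_fun (fun u hu => ?_) measurableSet_Ioc
  rw [dslope_of_ne _ hu.1.ne', slope_log_one_sub_ofReal_mul]

lemma intervalIntegrable_mul_log_ofReal_mul_div (hz : z ∈ slitPlane) (hz1 : 1 - z ∈ slitPlane) :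
    IntervalIntegrable (fun u : ℝ => z * log (u * z) / (1 - u * z)) volume 0 1 := by
  have hcont : ContinuousOn (fun u : ℝ => z / (1 - u * z)) (uIcc 0 1) := by
    rw [uIcc_of_le zero_le_one]
    exact continuousOn_const.div (by fun_prop)
      fun u hu => slitPlane_ne_zero (one_sub_ofReal_mul_mem_slitPlane hu hz1)
  have hlog : IntervalIntegrable (fun u : ℝ => (Real.log u : ℂ) + log z) volume 0 1 :=
    IntervalIntegrable.add (f := fun u : ℝ => (Real.log u : ℂ))
      ⟨intervalIntegral.intervalIntegrable_log'.1.ofReal,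
        intervalIntegral.intervalIntegrable_log'.2.ofReal⟩
      intervalIntegrable_const
  have hint := hlog.mul_continuousOn hcont
  rw [intervalIntegrable_iff_integrableOn_Ioc_of_le zero_le_one] at hint ⊢
  refine hint.congr_fun (fun u hu => ?_) measurableSet_Ioc
  rw [log_ofReal_mul hu.1 (slitPlane_ne_zero hz)]
  ring

lemma hasDerivAt_log_ofReal_mul_mul_log_one_sub {u : ℝ} (hu : u ∈ Ioo (0 : ℝ) 1)
    (hz : z ∈ slitPlane) (hz1 : 1 - z ∈ slitPlane) :
    HasDerivAt (fun u : ℝ => log (u * z) * log (1 - u * z))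
      (log (1 - u * z) / u - z * log (u * z) / (1 - u * z)) u := by
  refine ((hasDerivAt_log_ofReal_mul (ofReal_mul_mem_slitPlane hu.1 hz)).mul
    (hasDerivAt_log_one_sub_ofReal_mul
      (one_sub_ofReal_mul_mem_slitPlane (Ioo_subset_Icc_self hu) hz1))).congr_deriv ?_
  have hu0 : (u : ℂ) ≠ 0 := ofReal_ne_zero.2 hu.1.ne'
  field_simp [slitPlane_ne_zero hz]
  ring

-- `log (u z) = log u + log z`, and `log u · log (1 - u z) = (u log u) · (log (1 - u z) / u)`,
-- which tends to `0 · (-z)`.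
lemma tendsto_log_ofReal_mul_mul_log_one_sub (hz : z ∈ slitPlane) :
    Tendsto (fun u : ℝ => log (u * z) * log (1 - u * z)) (𝓝[>] 0) (𝓝 0) := by
  have hderiv := hasDerivAt_log_one_sub_ofReal_mul (z := z) (u := 0) (by simp)
  have hslope : Tendsto (fun u : ℝ => log (1 - u * z) / u) (𝓝[>] 0) (𝓝 (-z)) := by
    simpa [real_smul, div_eq_inv_mul] using hderiv.tendsto_slope_zero_right
  have hulog : Tendsto (fun u : ℝ => ((u * Real.log u : ℝ) : ℂ)) (𝓝[>] 0) (𝓝 0) := by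
    simpa [Function.comp_def] using
      ((continuous_ofReal.comp Real.continuous_mul_log).tendsto 0).mono_left nhdsWithin_le_nhds
  have hlog1 : Tendsto (fun u : ℝ => log (1 - u * z)) (𝓝[>] 0) (𝓝 0) := by
    simpa using hderiv.continuousAt.tendsto.mono_left nhdsWithin_le_nhds
  refine ((hulog.mul hslope).add (hlog1.const_mul (log z))).congr' ?_ |>.trans (by simp)
  filter_upwards [self_mem_nhdsWithin] with u (hu : 0 < u)
  have hu0 : (u : ℂ) ≠ 0 := ofReal_ne_zero.2 hu.ne'
  rw [log_ofReal_mul hu (slitPlane_ne_zero hz)]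
  push_cast
  field_simp

lemma integral_log_one_sub_ofReal_mul_div_sub (hz : z ∈ slitPlane) (hz1 : 1 - z ∈ slitPlane) :
    ∫ u in (0 : ℝ)..1, (log (1 - u * z) / u - z * log (u * z) / (1 - u * z)) =
      log z * log (1 - z) := by
  have hcont : ContinuousAt (fun u : ℝ => log (u * z) * log (1 - u * z)) 1 :=
    ((hasDerivAt_log_ofReal_mul (by simpa using hz)).mul
      (hasDerivAt_log_one_sub_ofReal_mul (by simpa using hz1))).continuousAt
  simpa using intervalIntegral.integral_eq_sub_of_hasDerivAt_of_tendsto zero_lt_one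
    (fun u hu => hasDerivAt_log_ofReal_mul_mul_log_one_sub hu hz hz1)
    ((intervalIntegrable_log_one_sub_ofReal_mul_div hz1).sub
      (intervalIntegrable_mul_log_ofReal_mul_div hz hz1))
    (tendsto_log_ofReal_mul_mul_log_one_sub hz) (hcont.tendsto.mono_left nhdsWithin_le_nhds)

lemma Dfun_eq_neg_two_mul_Li2_sub_log_mul_log (hz : z ∈ slitPlane) (hz1 : 1 - z ∈ slitPlane) :
    Dfun z = -2 * Li2 z - log z * log (1 - z) := by
  have hf := intervalIntegrable_log_one_sub_ofReal_mul_div hz1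
  have hq := intervalIntegrable_mul_log_ofReal_mul_div hz hz1
  calc Dfun z
      = ∫ u in (0 : ℝ)..1, (2 * (log (1 - u * z) / u) -
          (log (1 - u * z) / u - z * log (u * z) / (1 - u * z))) :=
        intervalIntegral.integral_congr fun u _ => by ring
    _ = 2 * (∫ u in (0 : ℝ)..1, log (1 - u * z) / u) -
          ∫ u in (0 : ℝ)..1, (log (1 - u * z) / u - z * log (u * z) / (1 - u * z)) := by
        rw [intervalIntegral.integral_sub (hf.const_mul 2) (hf.sub hq),
          intervalIntegral.integral_const_mul]
    _ = -2 * Li2 z - log z * log (1 - z) := by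
        rw [integral_log_one_sub_ofReal_mul_div_sub hz hz1, Li2]
        ring

end Dilogarithm

lemma wedgeTensor_tmul (x y : ℂ) : wedgeTensor (x ⊗ₜ[ℚ] y) = wedge x y := rfl

lemma wedge_swap (x y : ℂ) : wedge y x = -wedge x y := by
  have h := (ExteriorAlgebra.ιMulti ℚ 2 (M := ℂ)).map_swap ![x, y] (i := 0) (j := 1) (by decide)
  have hv : ![x, y] ∘ Equiv.swap 0 1 = ![y, x] := by ext i; fin_cases i <;> rfl
  exact Subtype.ext (by simpa [wedge, hv] using h)

lemma wedge_neg_left (x y : ℂ) : wedge (-x) y = -wedge x y :=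
  wedgeBil.map_neg₂ x y

lemma wedge_sub_right (x y y' : ℂ) : wedge x (y - y') = wedge x y - wedge x y' :=
  (wedgeBil x).map_sub y y'

lemma inv_polylogPeriodMatrix {K : Type*} [Field K] {t : K} (a b c : K) (ht : t ≠ 0) :
    (!![1, a, b; 0, t, t * c; 0, 0, t ^ 2])⁻¹ =
      !![1, -a / t, (a * c - b) / t ^ 2; 0, t⁻¹, -c / t ^ 2; 0, 0, (t ^ 2)⁻¹] := by
  refine Matrix.inv_eq_right_inv ?_
  ext i j
  fin_cases i <;> fin_cases j <;> simp [Matrix.mul_apply, Fin.sum_univ_three] <;> field_simp <;>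
    ring

lemma wedgeTensor_skewPeriod_polylogPeriodMatrix {t : ℂ} (a b c : ℂ) (ht : t ≠ 0) :
    letI M : Matrix (Fin 3) (Fin 3) ℂ := !![1, a, b; 0, t, t * c; 0, 0, t ^ 2]
    wedgeTensor (∑ k : Fin 3, (M⁻¹ 0 k) ⊗ₜ[ℚ] ((t ^ 2)⁻¹ * M k 2)) =
      wedge (c / t) (a / t) + wedge 1 ((2 * b - a * c) / t ^ 2) := by
  have hc : (t ^ 2)⁻¹ * (t * c) = c / t := by field_simp
  have hb : (2 * b - a * c) / t ^ 2 = (t ^ 2)⁻¹ * b - (a * c - b) / t ^ 2 := by ring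
  simp only [inv_polylogPeriodMatrix a b c ht, Fin.sum_univ_three, Matrix.of_apply,
    Matrix.cons_val', Matrix.cons_val_zero, Matrix.cons_val_one, Matrix.cons_val,
    Matrix.cons_val_fin_one, hc, inv_mul_cancel₀ (pow_ne_zero 2 ht), map_add, wedgeTensor_tmul]
  rw [hb, wedge_sub_right, neg_div, wedge_neg_left, ← wedge_swap, wedge_swap 1]
  abel

/-- The skew-symmetric period of the second polylogarithm Hodge–Tate structure
`𝒫⁽²⁾(z)` equals the Bloch regulator `ρ̃(z)`. -/
theorem skew_symmetric_period_eq_bloch_regulator (z : ℂ)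
    (hz : z ∉ Complex.ofReal '' (Set.Iic 0 ∪ Set.Ici 1)) :
    letI τ : ℂ := 2 * Real.pi * Complex.I
    letI M : Matrix (Fin 3) (Fin 3) ℂ :=
      !![1, Complex.log (1 - z), -Li2 z; 0, τ, τ * Complex.log z; 0, 0, τ ^ 2]
    wedgeTensor (∑ k : Fin 3, (M⁻¹ 0 k) ⊗ₜ[ℚ] ((τ ^ 2)⁻¹ * M k 2)) =
      wedge (Complex.log z / τ) (Complex.log (1 - z) / τ) + wedge 1 (Dfun z / τ ^ 2) := by
  obtain ⟨hz0, hz1⟩ := mem_slitPlane_of_notMem_ofReal_image hz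
  rw [wedgeTensor_skewPeriod_polylogPeriodMatrix _ _ _ two_pi_I_ne_zero,
    Dfun_eq_neg_two_mul_Li2_sub_log_mul_log hz0 hz1]
  congr 3
  ring
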